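/- Let T be an integral domain, E the subring of T consisting of 0 together with the Egyptian elements of T, and p a prime ideal of T with E ∩ p = (0). Let B be a subring of E and D = B + p. Then R(D) = R(B) + R(p), where R(p) is the ideal of R(D) generated by the elements 1/x for nonzero x ∈ p, and R(p) is a prime ideal of R(D). -/

import Mathlib

/-- An element is Egyptian w.r.t. `T` if it is a (nonempty) finite sum of reciprocals
of nonzero elements of `T`, computed in the quotient field `F`. -/
def IsEgyptian (T F : Type*) [CommRing T] [Field F] [Algebra T F] (x : F) : Prop :=
  ∃ (n : ℕ) (f : Fin n → T), 0 < n ∧ (∀ i, f i ≠ 0) ∧ x = ∑ i, (algebraMap T F (f i))⁻¹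

/-- The reciprocal complement `R(D)` of the subring `D = B + p` of `T`, inside `F`. -/
def recipD (T F : Type*) [CommRing T] [Field F] [Algebra T F] (B : Subring T)
    (p : Ideal T) : Subring F :=
  Subring.closure {y : F | ∃ t : T, (∃ b ∈ B, ∃ z ∈ p, t = b + z) ∧ t ≠ 0 ∧
    y = (algebraMap T F t)⁻¹}

/-- The reciprocal complement `R(B)` of a subring `B` of `T`, inside `F`. -/
def recipB (T F : Type*) [CommRing T] [Field F] [Algebra T F] (B : Subring T) :
    Subring F :=
  Subring.closure {y : F | ∃ b ∈ B, b ≠ 0 ∧ y = (algebraMap T F b)⁻¹}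

/-- The ideal `R(p)` of `R(D)` generated by the elements `1/x` for nonzero `x ∈ p`. -/
def recipP (T F : Type*) [CommRing T] [Field F] [Algebra T F] (B : Subring T)
    (p : Ideal T) : Ideal (recipD T F B p) :=
  Ideal.span {r : recipD T F B p | ∃ x ∈ p, x ≠ 0 ∧ (r : F) = (algebraMap T F x)⁻¹}

section Stmt19Aux

variable {T F : Type*} [CommRing T] [IsDomain T] [Field F] [Algebra T F] [IsFractionRing T F]
variable (B : Subring T) (p : Ideal T)

private lemma A_ne {t : T} (h : t ≠ 0) : algebraMap T F t ≠ 0 := by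
  intro hc
  exact h (IsFractionRing.injective T F (by rw [hc, map_zero]))

private lemma memD_gen {t b z : T} (hb : b ∈ B) (hz : z ∈ p) (ht : t = b + z) (ht0 : t ≠ 0) :
    (algebraMap T F t)⁻¹ ∈ recipD T F B p :=
  Subring.subset_closure ⟨t, ⟨b, hb, z, hz, ht⟩, ht0, rfl⟩

private lemma memD_p {x : T} (hx : x ∈ p) (hx0 : x ≠ 0) :
    (algebraMap T F x)⁻¹ ∈ recipD T F B p :=
  memD_gen B p B.zero_mem hx (zero_add x).symm hx0

private lemma memD_B {b : T} (hb : b ∈ B) (hb0 : b ≠ 0) :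
    (algebraMap T F b)⁻¹ ∈ recipD T F B p :=
  memD_gen B p hb p.zero_mem (add_zero b).symm hb0

/-- the canonical generator of `recipP` attached to `x ∈ p`, `x ≠ 0`. -/
private def pgen {x : T} (hx : x ∈ p) (hx0 : x ≠ 0) : recipD T F B p :=
  ⟨_, memD_p B p hx hx0⟩

private lemma pgen_val {x : T} (hx : x ∈ p) (hx0 : x ≠ 0) :
    ((pgen B p hx hx0 : recipD T F B p) : F) = (algebraMap T F x)⁻¹ := rfl

private lemma memP_pgen {x : T} (hx : x ∈ p) (hx0 : x ≠ 0) :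
    pgen B p hx hx0 ∈ recipP T F B p :=
  Ideal.subset_span ⟨x, hx, hx0, rfl⟩

private lemma recipB_le_recipD : recipB T F B ≤ recipD T F B p := by
  rw [recipB, Subring.closure_le]
  rintro y ⟨b, hb, hb0, rfl⟩
  exact memD_B B p hb hb0

/-- key field identity : `1/(b+z) = 1/z - b/((b+z)z)`. -/
private lemma inv_key {β ζ : F} (hζ : ζ ≠ 0) (hτ : β + ζ ≠ 0) :
    (β + ζ)⁻¹ = ζ⁻¹ - β * ((β + ζ) * ζ)⁻¹ := by
  field_simp
  ring

/-- Part (1): decomposition of every element of `R(D)` as `R(B)`-part plus `R(p)`-part. -/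
private lemma decompose (E : Subring T)
    (hE : (E : Set T) = {x : T | x = 0 ∨ IsEgyptian T F (algebraMap T F x)})
    (hB : B ≤ E) :
    ∀ y ∈ recipD T F B p, ∃ b ∈ recipB T F B, ∃ q : recipD T F B p,
      q ∈ recipP T F B p ∧ y = b + (q : F) := by
  intro y hy
  induction hy using Subring.closure_induction with
  | mem y hy =>
    obtain ⟨t, ⟨b, hbB, z, hzp, ht⟩, ht0, rfl⟩ := hy
    by_cases hz0 : z = 0
    · -- pure `B` generator
      subst hz0
      have hb0 : b ≠ 0 := by
        intro h; apply ht0; rw [ht, h, add_zero]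
      refine ⟨(algebraMap T F t)⁻¹, ?_, 0, (recipP T F B p).zero_mem, by simp⟩
      have : t = b := by rw [ht, add_zero]
      subst this
      exact Subring.subset_closure ⟨t, hbB, hb0, rfl⟩
    · -- the `p`-part is nonzero
      by_cases hb0 : b = 0
      · -- pure `p` generator
        have htp : t ∈ p := by
          rw [ht, hb0, zero_add]; exact hzp
        exact ⟨0, (recipB T F B).zero_mem, pgen B p htp ht0, memP_pgen B p htp ht0,
          by rw [pgen_val, zero_add]⟩
      · -- mixed generator:  1/t = 1/z - Σᵢ 1/(fᵢ t z) ∈ R(p)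
        have hbE : b ∈ E := hB hbB
        have : b = 0 ∨ IsEgyptian T F (algebraMap T F b) := by
          have hb' : b ∈ (E : Set T) := hbE
          rw [hE] at hb'
          simpa using hb'
        obtain ⟨n, f, -, hf, hsum⟩ := this.resolve_left hb0
        have hfi : ∀ i : Fin n, f i * (t * z) ∈ p := fun i => p.mul_mem_left _ (p.mul_mem_left _ hzp)
        have hfi0 : ∀ i : Fin n, f i * (t * z) ≠ 0 := fun i =>
          mul_ne_zero (hf i) (mul_ne_zero ht0 hz0)
        refine ⟨0, (recipB T F B).zero_mem,
          pgen B p hzp hz0 - ∑ i : Fin n, pgen B p (hfi i) (hfi0 i), ?_, ?_⟩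
        · exact Ideal.sub_mem _ (memP_pgen B p hzp hz0)
            (Ideal.sum_mem _ fun i _ => memP_pgen B p (hfi i) (hfi0 i))
        · have hcoe : ((pgen B p hzp hz0 - ∑ i : Fin n, pgen B p (hfi i) (hfi0 i) :
              recipD T F B p) : F)
              = (algebraMap T F z)⁻¹ - ∑ i : Fin n, (algebraMap T F (f i * (t * z)))⁻¹ := by
            push_cast [pgen_val]
            rfl
          rw [hcoe, zero_add]
          have h1 : ∀ i : Fin n, (algebraMap T F (f i * (t * z)))⁻¹
              = (algebraMap T F (f i))⁻¹ * ((algebraMap T F t) * (algebraMap T F z))⁻¹ := by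
            intro i; rw [map_mul, map_mul, mul_inv]
          rw [Finset.sum_congr rfl (fun i _ => h1 i), ← Finset.sum_mul, ← hsum]
          have hτ : algebraMap T F t = algebraMap T F b + algebraMap T F z := by
            rw [ht, map_add]
          rw [hτ]
          exact inv_key (A_ne hz0) (hτ ▸ A_ne ht0)
  | zero => exact ⟨0, (recipB T F B).zero_mem, 0, (recipP T F B p).zero_mem, by simp⟩
  | one => exact ⟨1, (recipB T F B).one_mem, 0, (recipP T F B p).zero_mem, by simp⟩
  | add x y hx hy ihx ihy =>
    obtain ⟨bx, hbx, qx, hqx, hvx⟩ := ihx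
    obtain ⟨by', hby, qy, hqy, hvy⟩ := ihy
    exact ⟨bx + by', add_mem hbx hby, qx + qy, Ideal.add_mem _ hqx hqy, by
      push_cast; rw [hvx, hvy]; ring⟩
  | neg x hx ihx =>
    obtain ⟨bx, hbx, qx, hqx, hvx⟩ := ihx
    exact ⟨-bx, neg_mem hbx, -qx, neg_mem hqx, by push_cast; rw [hvx]; ring⟩
  | mul x y hx hy ihx ihy =>
    obtain ⟨bx, hbx, qx, hqx, hvx⟩ := ihx
    obtain ⟨by', hby, qy, hqy, hvy⟩ := ihy
    refine ⟨bx * by', mul_mem hbx hby,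
      (⟨bx, recipB_le_recipD B p hbx⟩ : recipD T F B p) * qy
        + qx * (⟨by', recipB_le_recipD B p hby⟩ : recipD T F B p) + qx * qy, ?_, ?_⟩
    · exact Ideal.add_mem _ (Ideal.add_mem _ (Ideal.mul_mem_left _ _ hqy)
        (Ideal.mul_mem_right _ _ hqx)) (Ideal.mul_mem_left _ _ hqy)
    · push_cast
      rw [hvx, hvy]
      ring

/-- additive subgroup of `F` generated by reciprocals of nonzero elements of `p`. -/
private def phiHat : AddSubgroup F :=
  AddSubgroup.closure {y : F | ∃ x : T, x ∈ p ∧ x ≠ 0 ∧ y = (algebraMap T F x)⁻¹}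

private lemma phiHat_rep : ∀ y ∈ phiHat (F := F) p, ∃ (n : ℕ) (w : Fin n → T),
    (∀ i, w i ∈ p ∧ w i ≠ 0) ∧ y = ∑ i, (algebraMap T F (w i))⁻¹ := by
  intro y hy
  induction hy using AddSubgroup.closure_induction with
  | mem y hy =>
    obtain ⟨x, hx, hx0, rfl⟩ := hy
    exact ⟨1, fun _ => x, fun _ => ⟨hx, hx0⟩, by simp⟩
  | zero => exact ⟨0, fun i => 1, fun i => i.elim0, by simp⟩
  | add x y hx hy ihx ihy =>
    obtain ⟨n, w, hw, hvx⟩ := ihx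
    obtain ⟨m, v, hv, hvy⟩ := ihy
    refine ⟨n + m, Fin.append w v, ?_, ?_⟩
    · intro i
      refine Fin.addCases (fun j => ?_) (fun j => ?_) i
      · rw [Fin.append_left]; exact hw j
      · rw [Fin.append_right]; exact hv j
    · rw [Fin.sum_univ_add]
      simp only [Fin.append_left, Fin.append_right]
      rw [hvx, hvy]
  | neg x hx ihx =>
    obtain ⟨n, w, hw, hvx⟩ := ihx
    refine ⟨n, fun i => -(w i), fun i => ⟨p.neg_mem (hw i).1, neg_ne_zero.2 (hw i).2⟩, ?_⟩
    rw [hvx, ← Finset.sum_neg_distrib]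
    exact Finset.sum_congr rfl fun i _ => by rw [map_neg, inv_neg]

private lemma mul_phiHat : ∀ u ∈ recipD T F B p, ∀ y ∈ phiHat (F := F) p,
    u * y ∈ phiHat (F := F) p := by
  intro u hu
  induction hu using Subring.closure_induction with
  | mem u hu =>
    obtain ⟨t, -, ht0, rfl⟩ := hu
    intro y hy
    induction hy using AddSubgroup.closure_induction with
    | mem y hy =>
      obtain ⟨x, hx, hx0, rfl⟩ := hy
      refine AddSubgroup.subset_closure ⟨t * x, p.mul_mem_left t hx, mul_ne_zero ht0 hx0, ?_⟩
      rw [map_mul, mul_inv]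
    | zero => simpa using (phiHat (F := F) p).zero_mem
    | add y₁ y₂ h₁ h₂ ih₁ ih₂ => rw [mul_add]; exact add_mem ih₁ ih₂
    | neg y₁ h₁ ih₁ => rw [mul_neg]; exact neg_mem ih₁
  | zero => intro y hy; simpa using (phiHat (F := F) p).zero_mem
  | one => intro y hy; simpa using hy
  | add u₁ u₂ h₁ h₂ ih₁ ih₂ =>
    intro y hy; rw [add_mul]; exact add_mem (ih₁ y hy) (ih₂ y hy)
  | neg u₁ h₁ ih₁ => intro y hy; rw [neg_mul]; exact neg_mem (ih₁ y hy)
  | mul u₁ u₂ h₁ h₂ ih₁ ih₂ =>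
    intro y hy; rw [mul_assoc]; exact ih₁ _ (ih₂ y hy)

private lemma recipP_val_mem_phiHat : ∀ q : recipD T F B p, q ∈ recipP T F B p →
    (q : F) ∈ phiHat (F := F) p := by
  intro q hq
  induction hq using Submodule.span_induction with
  | mem r hr =>
    obtain ⟨x, hx, hx0, hr⟩ := hr
    exact hr ▸ AddSubgroup.subset_closure ⟨x, hx, hx0, rfl⟩
  | zero => simpa using (phiHat (F := F) p).zero_mem
  | add r s hr hs ihr ihs => push_cast; exact add_mem ihr ihs
  | smul a r hr ihr =>
    have : ((a • r : recipD T F B p) : F) = (a : F) * (r : F) := by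
      rw [smul_eq_mul]; push_cast; ring
    rw [this]
    exact mul_phiHat B p (a : F) a.2 _ ihr

/-- every element of `R(B)` is a fraction of elements of `B`. -/
private lemma recipB_frac : ∀ y ∈ recipB T F B, ∃ P ∈ B, ∃ Q ∈ B, Q ≠ 0 ∧
    y = algebraMap T F P * (algebraMap T F Q)⁻¹ := by
  intro y hy
  induction hy using Subring.closure_induction with
  | mem y hy =>
    obtain ⟨b, hb, hb0, rfl⟩ := hy
    exact ⟨1, one_mem _, b, hb, hb0, by rw [map_one, one_mul]⟩
  | zero => exact ⟨0, zero_mem _, 1, one_mem _, one_ne_zero, by rw [map_zero, zero_mul]⟩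
  | one => exact ⟨1, one_mem _, 1, one_mem _, one_ne_zero, by simp⟩
  | add x y hx hy ihx ihy =>
    obtain ⟨P, hP, Q, hQ, hQ0, hvx⟩ := ihx
    obtain ⟨P', hP', Q', hQ', hQ0', hvy⟩ := ihy
    refine ⟨P * Q' + P' * Q, add_mem (mul_mem hP hQ') (mul_mem hP' hQ),
      Q * Q', mul_mem hQ hQ', mul_ne_zero hQ0 hQ0', ?_⟩
    rw [hvx, hvy, map_add, map_mul, map_mul, map_mul]
    field_simp [A_ne hQ0, A_ne hQ0']
  | neg x hx ihx =>
    obtain ⟨P, hP, Q, hQ, hQ0, hvx⟩ := ihx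
    exact ⟨-P, neg_mem hP, Q, hQ, hQ0, by rw [hvx, map_neg, neg_mul]⟩
  | mul x y hx hy ihx ihy =>
    obtain ⟨P, hP, Q, hQ, hQ0, hvx⟩ := ihx
    obtain ⟨P', hP', Q', hQ', hQ0', hvy⟩ := ihy
    refine ⟨P * P', mul_mem hP hP', Q * Q', mul_mem hQ hQ', mul_ne_zero hQ0 hQ0', ?_⟩
    rw [hvx, hvy, map_mul, map_mul, mul_inv]
    ring

/-- finite (possibly empty) sums of reciprocals of nonzero elements of `T`. -/
private def Egy (T F : Type*) [CommRing T] [Field F] [Algebra T F] (y : F) : Prop :=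
  ∃ (n : ℕ) (w : Fin n → T), (∀ i, w i ≠ 0) ∧ y = ∑ i, (algebraMap T F (w i))⁻¹

private lemma Egy_zero : Egy T F 0 := ⟨0, fun i => i.elim0, fun i => i.elim0, by simp⟩

private lemma Egy_recip {t : T} (ht : t ≠ 0) : Egy T F (algebraMap T F t)⁻¹ :=
  ⟨1, fun _ => t, fun _ => ht, by simp⟩

private lemma Egy_add {a b : F} (ha : Egy T F a) (hb : Egy T F b) : Egy T F (a + b) := by
  obtain ⟨n, w, hw, rfl⟩ := ha
  obtain ⟨m, v, hv, rfl⟩ := hb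
  refine ⟨n + m, Fin.append w v, ?_, ?_⟩
  · intro i
    refine Fin.addCases (fun j => ?_) (fun j => ?_) i
    · rw [Fin.append_left]; exact hw j
    · rw [Fin.append_right]; exact hv j
  · rw [Fin.sum_univ_add]
    simp only [Fin.append_left, Fin.append_right]

private lemma Egy_neg {a : F} (ha : Egy T F a) : Egy T F (-a) := by
  obtain ⟨n, w, hw, rfl⟩ := ha
  refine ⟨n, fun i => -(w i), fun i => neg_ne_zero.2 (hw i), ?_⟩
  rw [← Finset.sum_neg_distrib]
  exact Finset.sum_congr rfl fun i _ => by rw [map_neg, inv_neg]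

private lemma Egy_mul {a b : F} (ha : Egy T F a) (hb : Egy T F b) : Egy T F (a * b) := by
  obtain ⟨n, w, hw, rfl⟩ := ha
  obtain ⟨m, v, hv, rfl⟩ := hb
  refine ⟨n * m, fun i => w (finProdFinEquiv.symm i).1 * v (finProdFinEquiv.symm i).2,
    fun i => mul_ne_zero (hw _) (hv _), ?_⟩
  rw [← Equiv.sum_comp (finProdFinEquiv (m := n) (n := m))]
  simp only [Equiv.symm_apply_apply]
  rw [Fintype.sum_prod_type, Finset.sum_mul]
  refine Finset.sum_congr rfl fun i _ => ?_
  rw [Finset.mul_sum]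
  refine Finset.sum_congr rfl fun j _ => ?_
  rw [map_mul, mul_inv]

private lemma Egy_one : Egy T F 1 := by
  have := Egy_recip (T := T) (F := F) one_ne_zero
  simpa using this

/-- subset products. -/
private def Vd {k : ℕ} (d : Fin k → T) (S : Finset (Fin k)) : T := ∏ i ∈ S, d i

private def Pd {k : ℕ} (d : Fin k → T) (S : Finset (Fin k)) : T := ∑ i ∈ S, Vd d (S.erase i)

private def Dd {k : ℕ} (d : Fin k → T) (S : Finset (Fin k)) : T := Vd d S - Pd d S

private lemma key_id {k : ℕ} (d : Fin k → T) {M : Finset (Fin k)} {i : Fin k} (hi : i ∈ M) :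
    d i * Dd d (M.erase i) = Dd d M + Vd d (M.erase i) := by
  have hV : Vd d M = d i * Vd d (M.erase i) := (Finset.mul_prod_erase M d hi).symm
  have hP : Pd d M = Vd d (M.erase i) + d i * Pd d (M.erase i) := by
    unfold Pd
    rw [← Finset.add_sum_erase M _ hi]
    congr 1
    rw [Finset.mul_sum]
    refine Finset.sum_congr rfl fun j hj => ?_
    have hij : i ≠ j := fun h => (Finset.notMem_erase i M) (h ▸ hj)
    have hiMj : i ∈ M.erase j := Finset.mem_erase.2 ⟨hij, hi⟩
    have h2 : Vd d (M.erase j) = d i * Vd d ((M.erase j).erase i) := by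
      unfold Vd
      exact (Finset.mul_prod_erase _ d hiMj).symm
    rw [h2, Finset.erase_right_comm]
  unfold Dd
  rw [hV, hP]
  ring

private lemma val_V_ne {k : ℕ} {d : Fin k → T} (hd : ∀ i, d i ≠ 0) (S : Finset (Fin k)) :
    algebraMap T F (Vd d S) ≠ 0 :=
  A_ne (Finset.prod_ne_zero_iff.2 fun a _ => hd a)

private lemma val_D {k : ℕ} {d : Fin k → T} (hd : ∀ i, d i ≠ 0) (S : Finset (Fin k)) :
    algebraMap T F (Dd d S)
      = algebraMap T F (Vd d S) * (1 - ∑ i ∈ S, (algebraMap T F (d i))⁻¹) := by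
  unfold Dd
  rw [map_sub, mul_sub, mul_one]
  congr 1
  unfold Pd
  rw [map_sum, Finset.mul_sum]
  refine Finset.sum_congr rfl fun i hi => ?_
  have hV : Vd d S = d i * Vd d (S.erase i) := (Finset.mul_prod_erase S d hi).symm
  rw [hV, map_mul, mul_comm (algebraMap T F (d i)) (algebraMap T F (Vd d (S.erase i))),
    mul_inv_cancel_right₀ (A_ne (hd i))]

/-- the master combinatorial lemma: subset products over subset moduli are sums of
reciprocals, by lexicographic induction on `(M.card, μ.card)`. -/
private lemma ML {k : ℕ} (d : Fin k → T) :
    ∀ (N : ℕ) (M μ : Finset (Fin k)), M.card * (k + 1) + μ.card ≤ N →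
      (∀ S ⊆ M, algebraMap T F (Dd d S) ≠ 0) → μ ⊆ M →
      Egy T F (algebraMap T F (Vd d μ) * (algebraMap T F (Dd d M))⁻¹) := by
  intro N
  induction N using Nat.strong_induction_on with
  | _ N IH =>
    intro M μ hN hD hμM
    rcases Finset.eq_empty_or_nonempty μ with rfl | ⟨i, hiμ⟩
    · have h1 : Vd d (∅ : Finset (Fin k)) = 1 := Finset.prod_empty
      rw [h1, map_one, one_mul]
      refine Egy_recip fun h => hD M (le_refl M) ?_
      rw [h, map_zero]
    · have hiM : i ∈ M := hμM hiμ
      have hMne : 0 < M.card := Finset.card_pos.2 ⟨i, hiM⟩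
      have hμk : ∀ (S : Finset (Fin k)), S.card ≤ k := fun S => by
        simpa using Finset.card_le_univ S
      have hDne : algebraMap T F (Dd d M) ≠ 0 := hD M (le_refl M)
      have hD'ne : algebraMap T F (Dd d (M.erase i)) ≠ 0 :=
        hD (M.erase i) (Finset.erase_subset i M)
      have hid : algebraMap T F (d i) * algebraMap T F (Dd d (M.erase i))
          = algebraMap T F (Dd d M) + algebraMap T F (Vd d (M.erase i)) := by
        rw [← map_mul, ← map_add, key_id d hiM]
      have hVμ : algebraMap T F (Vd d μ)
          = algebraMap T F (d i) * algebraMap T F (Vd d (μ.erase i)) := by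
        rw [← map_mul]
        exact congrArg _ (Finset.mul_prod_erase μ d hiμ).symm
      -- the central algebraic identity
      have hX : algebraMap T F (Vd d μ) * (algebraMap T F (Dd d M))⁻¹
          = algebraMap T F (Vd d (μ.erase i)) * (algebraMap T F (Dd d (M.erase i)))⁻¹
            + (algebraMap T F (Vd d (M.erase i)) * (algebraMap T F (Dd d (M.erase i)))⁻¹)
              * (algebraMap T F (Vd d (μ.erase i)) * (algebraMap T F (Dd d M))⁻¹) := by
        rw [hVμ]
        set a := algebraMap T F (Vd d (μ.erase i)) with ha
        set c := algebraMap T F (d i) with hc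
        set D := algebraMap T F (Dd d M) with hDd
        set D' := algebraMap T F (Dd d (M.erase i)) with hDd'
        set v := algebraMap T F (Vd d (M.erase i)) with hv
        calc c * a * D⁻¹
            = c * a * D⁻¹ * (D' * D'⁻¹) := by rw [mul_inv_cancel₀ hD'ne, mul_one]
          _ = (c * D') * (a * (D⁻¹ * D'⁻¹)) := by ring
          _ = (D + v) * (a * (D⁻¹ * D'⁻¹)) := by rw [hid]
          _ = a * D'⁻¹ * (D * D⁻¹) + (v * D'⁻¹) * (a * D⁻¹) := by ring
          _ = a * D'⁻¹ * 1 + (v * D'⁻¹) * (a * D⁻¹) := by rw [mul_inv_cancel₀ hDne]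
          _ = a * D'⁻¹ + (v * D'⁻¹) * (a * D⁻¹) := by rw [mul_one]
      rw [hX]
      -- measure bookkeeping
      have hMcard : (M.erase i).card = M.card - 1 := Finset.card_erase_of_mem hiM
      have hb1 : (M.erase i).card * (k + 1) + (μ.erase i).card < N := by
        have h2 : (μ.erase i).card ≤ k := hμk _
        have h3 : (M.card - 1) * (k + 1) + (k + 1) = M.card * (k + 1) := by
          have : M.card - 1 + 1 = M.card := Nat.succ_pred_eq_of_pos hMne
          calc (M.card - 1) * (k + 1) + (k + 1) = (M.card - 1 + 1) * (k + 1) := by ring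
            _ = M.card * (k + 1) := by rw [this]
        calc (M.erase i).card * (k + 1) + (μ.erase i).card
            < (M.card - 1) * (k + 1) + (k + 1) := by rw [hMcard]; omega
          _ = M.card * (k + 1) := h3
          _ ≤ N := le_trans (Nat.le_add_right _ _) hN
      have hb2 : (M.erase i).card * (k + 1) + (M.erase i).card < N := by
        have h2 : (M.erase i).card ≤ k := hμk _
        have h3 : (M.card - 1) * (k + 1) + (k + 1) = M.card * (k + 1) := by
          have : M.card - 1 + 1 = M.card := Nat.succ_pred_eq_of_pos hMne
          calc (M.card - 1) * (k + 1) + (k + 1) = (M.card - 1 + 1) * (k + 1) := by ring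
            _ = M.card * (k + 1) := by rw [this]
        calc (M.erase i).card * (k + 1) + (M.erase i).card
            < (M.card - 1) * (k + 1) + (k + 1) := by rw [hMcard]; omega
          _ = M.card * (k + 1) := h3
          _ ≤ N := le_trans (Nat.le_add_right _ _) hN
      have hb3 : M.card * (k + 1) + (μ.erase i).card < N := by
        have h4 : (μ.erase i).card = μ.card - 1 := Finset.card_erase_of_mem hiμ
        have h5 : 0 < μ.card := Finset.card_pos.2 ⟨i, hiμ⟩
        omega
      have hDsub : ∀ S ⊆ M.erase i, algebraMap T F (Dd d S) ≠ 0 := fun S hS =>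
        hD S (le_trans hS (Finset.erase_subset i M))
      refine Egy_add ?_ (Egy_mul ?_ ?_)
      · exact IH _ hb1 (M.erase i) (μ.erase i) (le_refl _) hDsub
          (Finset.erase_subset_erase i hμM)
      · exact IH _ hb2 (M.erase i) (M.erase i) (le_refl _) hDsub (le_refl _)
      · exact IH _ hb3 M (μ.erase i) (le_refl _) hD
          (le_trans (Finset.erase_subset i μ) hμM)

private lemma keyL_fin (hp : p.IsPrime) (E : Subring T)
    (hE : (E : Set T) = {x : T | x = 0 ∨ IsEgyptian T F (algebraMap T F x)})
    (hEp : ∀ x ∈ E, x ∈ p → x = 0) :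
    ∀ (n : ℕ) (w : Fin n → T), (∀ i, w i ∈ p) → (∀ i, w i ≠ 0) →
      ∑ i, (algebraMap T F (w i))⁻¹ ≠ 1 := by
  intro n
  induction n using Nat.strong_induction_on with
  | _ n IH =>
    intro w hwp hw0 hsum
    rcases Nat.eq_zero_or_pos n with rfl | hn
    · rw [Finset.univ_eq_empty, Finset.sum_empty] at hsum
      exact one_ne_zero hsum.symm
    · set j : Fin n := ⟨n - 1, by omega⟩ with hj
      set M : Finset (Fin n) := Finset.univ.erase j with hM
      have hsub : ∀ S : Finset (Fin n), S ⊆ M → ∑ i ∈ S, (algebraMap T F (w i))⁻¹ ≠ 1 := by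
        intro S hS hSsum
        have hcard : S.card < n := by
          have h1 := Finset.card_le_card hS
          have h2 : M.card = n - 1 := by
            rw [hM, Finset.card_erase_of_mem (Finset.mem_univ j), Finset.card_univ,
              Fintype.card_fin]
          omega
        refine IH S.card hcard (fun t => w ((S.equivFin.symm t) : Fin n))
          (fun t => hwp _) (fun t => hw0 _) ?_
        calc ∑ t : Fin S.card, (algebraMap T F (w ((S.equivFin.symm t) : Fin n)))⁻¹
            = ∑ x : {x // x ∈ S},
                (algebraMap T F (w ((S.equivFin.symm (S.equivFin x)) : Fin n)))⁻¹ :=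
              (Equiv.sum_comp S.equivFin _).symm
          _ = ∑ x : {x // x ∈ S}, (algebraMap T F (w x))⁻¹ := by
              simp only [Equiv.symm_apply_apply]
          _ = ∑ i ∈ S, (algebraMap T F (w i))⁻¹ :=
              Finset.sum_coe_sort S (fun i => (algebraMap T F (w i))⁻¹)
          _ = 1 := hSsum
      have hD0 : ∀ S ⊆ M, algebraMap T F (Dd w S) ≠ 0 := by
        intro S hS
        rw [val_D hw0 S]
        refine mul_ne_zero (val_V_ne hw0 S) ?_
        rw [sub_ne_zero]
        exact fun h => hsub S hS h.symm
      have hml := ML w (M.card * (n + 1) + M.card) M M (le_refl _) hD0 (le_refl M)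
      have h3 := Finset.add_sum_erase Finset.univ
        (fun i => (algebraMap T F (w i))⁻¹) (Finset.mem_univ j)
      rw [hsum, ← hM] at h3
      have hMsum : ∑ i ∈ M, (algebraMap T F (w i))⁻¹ = 1 - (algebraMap T F (w j))⁻¹ := by
        rw [eq_sub_iff_add_eq, add_comm]
        exact h3
      have hwj : algebraMap T F (w j) ≠ 0 := A_ne (hw0 j)
      have hDM : algebraMap T F (Dd w M)
          = algebraMap T F (Vd w M) * (algebraMap T F (w j))⁻¹ := by
        rw [val_D hw0 M, hMsum]
        congr 1
        ring
      have hval : algebraMap T F (Vd w M) * (algebraMap T F (Dd w M))⁻¹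
          = algebraMap T F (w j) := by
        rw [hDM, mul_inv, inv_inv, ← mul_assoc, mul_inv_cancel₀ (val_V_ne hw0 M), one_mul]
      rw [hval] at hml
      obtain ⟨m, u, hu, husum⟩ := hml
      rcases Nat.eq_zero_or_pos m with rfl | hm
      · rw [Finset.univ_eq_empty, Finset.sum_empty] at husum
        exact hwj husum
      · have hwjE : w j ∈ E := by
          have hmem : w j ∈ (E : Set T) := by
            rw [hE]
            exact Or.inr ⟨m, u, hm, hu, husum⟩
          exact hmem
        exact hw0 j (hEp _ hwjE (hwp j))

/-- the combinatorial core: `1` is not a finite sum of reciprocals of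
nonzero elements of `p`. -/
private lemma keyL (E : Subring T)
    (hE : (E : Set T) = {x : T | x = 0 ∨ IsEgyptian T F (algebraMap T F x)})
    (hp : p.IsPrime) (hEp : ∀ x ∈ E, x ∈ p → x = 0) :
    ∀ (ι : Type) (_ : Fintype ι) (w : ι → T), (∀ i, w i ∈ p) → (∀ i, w i ≠ 0) →
      ∑ i, (algebraMap T F (w i))⁻¹ ≠ 1 := by
  intro ι hι w hwp hw0 h
  refine keyL_fin p hp E hE hEp (Fintype.card ι)
    (fun t => w ((Fintype.equivFin ι).symm t)) (fun t => hwp _) (fun t => hw0 _) ?_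
  calc ∑ t : Fin (Fintype.card ι), (algebraMap T F (w ((Fintype.equivFin ι).symm t)))⁻¹
      = ∑ x : ι,
          (algebraMap T F (w ((Fintype.equivFin ι).symm ((Fintype.equivFin ι) x))))⁻¹ :=
        (Equiv.sum_comp (Fintype.equivFin ι) _).symm
    _ = ∑ x : ι, (algebraMap T F (w x))⁻¹ := by simp only [Equiv.symm_apply_apply]
    _ = 1 := h

/-- `R(B) ∩ R(p) = 0`. -/
private lemma inter_zero (E : Subring T)
    (hE : (E : Set T) = {x : T | x = 0 ∨ IsEgyptian T F (algebraMap T F x)})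
    (hp : p.IsPrime) (hEp : ∀ x ∈ E, x ∈ p → x = 0) (hB : B ≤ E) :
    ∀ y ∈ recipB T F B, ∀ q : recipD T F B p, q ∈ recipP T F B p → (q : F) = y → y = 0 := by
  intro y hy q hq hqy
  by_contra hy0
  obtain ⟨P, hP, Q, hQ, hQ0, hyv⟩ := recipB_frac B y hy
  have hP0 : P ≠ 0 := by
    intro h
    rw [h, map_zero, zero_mul] at hyv
    exact hy0 hyv
  have hQE : IsEgyptian T F (algebraMap T F Q) := by
    have hq' : Q ∈ (E : Set T) := hB hQ
    rw [hE] at hq'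
    exact hq'.resolve_left hQ0
  obtain ⟨m, g, -, hg, hgs⟩ := hQE
  have hyphi : y ∈ phiHat (F := F) p := hqy ▸ recipP_val_mem_phiHat B p q hq
  obtain ⟨n, w, hw, hrep⟩ := phiHat_rep p y hyphi
  refine keyL p E hE hp hEp (Fin m × Fin n) inferInstance
    (fun ki => g ki.1 * (P * w ki.2))
    (fun ki => p.mul_mem_left _ (p.mul_mem_left _ (hw ki.2).1))
    (fun ki => mul_ne_zero (hg ki.1) (mul_ne_zero hP0 (hw ki.2).2)) ?_
  have hterm : ∀ ki : Fin m × Fin n, (algebraMap T F (g ki.1 * (P * w ki.2)))⁻¹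
      = (algebraMap T F (g ki.1))⁻¹ * ((algebraMap T F P)⁻¹ * (algebraMap T F (w ki.2))⁻¹) := by
    intro ki; rw [map_mul, map_mul, mul_inv, mul_inv]
  calc ∑ ki : Fin m × Fin n, (algebraMap T F (g ki.1 * (P * w ki.2)))⁻¹
      = ∑ ki : Fin m × Fin n, (algebraMap T F (g ki.1))⁻¹ *
          ((algebraMap T F P)⁻¹ * (algebraMap T F (w ki.2))⁻¹) :=
        Finset.sum_congr rfl fun ki _ => hterm ki
    _ = ∑ k : Fin m, ∑ i : Fin n, (algebraMap T F (g k))⁻¹ *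
          ((algebraMap T F P)⁻¹ * (algebraMap T F (w i))⁻¹) :=
        Fintype.sum_prod_type _
    _ = (∑ k : Fin m, (algebraMap T F (g k))⁻¹) * ((algebraMap T F P)⁻¹ *
          (∑ i : Fin n, (algebraMap T F (w i))⁻¹)) := by
        rw [Finset.sum_mul]
        refine Finset.sum_congr rfl fun k _ => ?_
        rw [Finset.mul_sum, Finset.mul_sum]
    _ = algebraMap T F Q * ((algebraMap T F P)⁻¹ * y) := by rw [← hgs, ← hrep]
    _ = 1 := by
        have h1 : algebraMap T F P ≠ 0 := A_ne hP0
        have h2 : algebraMap T F Q ≠ 0 := A_ne hQ0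
        rw [hyv]
        field_simp
        try ring

end Stmt19Aux

/-- Let `T` be an integral domain, `E` the subring of `T` consisting of `0` together
with the Egyptian elements of `T`, and `p` a prime ideal of `T` with `E ∩ p = (0)`.
If `B` is a subring of `E` and `D = B + p`, then `R(D) = R(B) + R(p)`, where `R(p)`
is the ideal of `R(D)` generated by the elements `1/x` for nonzero `x ∈ p`, and
`R(p)` is a prime ideal of `R(D)`. -/
theorem stmt19 (T F : Type*) [CommRing T] [IsDomain T] [Field F] [Algebra T F]
    [IsFractionRing T F]
    (E : Subring T)
    (hE : (E : Set T) = {x : T | x = 0 ∨ IsEgyptian T F (algebraMap T F x)})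
    (p : Ideal T) (hp : p.IsPrime) (hEp : ∀ x ∈ E, x ∈ p → x = 0)
    (B : Subring T) (hB : B ≤ E) :
    (∀ r : recipD T F B p, ∃ b ∈ recipB T F B, ∃ q : recipD T F B p,
      q ∈ recipP T F B p ∧ (r : F) = b + (q : F)) ∧
    (recipP T F B p).IsPrime := by
  have hdec := decompose B p E hE hB
  have hzero := inter_zero B p E hE hp hEp hB
  constructor
  · intro r
    exact hdec (r : F) r.2
  · constructor
    · intro htop
      have h1 : (1 : recipD T F B p) ∈ recipP T F B p := (Ideal.eq_top_iff_one _).1 htop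
      have := hzero 1 (one_mem _) 1 h1 (by simp)
      exact one_ne_zero this
    · intro a c hac
      obtain ⟨ba, hba, qa, hqa, hva⟩ := hdec (a : F) a.2
      obtain ⟨bc, hbc, qc, hqc, hvc⟩ := hdec (c : F) c.2
      have hmem : (a - qa) * (c - qc) ∈ recipP T F B p := by
        have heq : (a - qa) * (c - qc) = a * c - (a * qc + qa * c - qa * qc) := by ring
        rw [heq]
        exact Ideal.sub_mem _ hac (Ideal.sub_mem _ (Ideal.add_mem _
          (Ideal.mul_mem_left _ _ hqc) (Ideal.mul_mem_right _ _ hqa))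
          (Ideal.mul_mem_left _ _ hqc))
      have hval : (((a - qa) * (c - qc) : recipD T F B p) : F) = ba * bc := by
        push_cast
        rw [hva, hvc]
        ring
      have h0 : ba * bc = 0 := hzero (ba * bc) (mul_mem hba hbc) _ hmem hval
      rcases mul_eq_zero.mp h0 with h | h
      · left
        have hv : (a : F) = (qa : F) := by rw [hva, h, zero_add]
        have ha' : a = qa := Subtype.ext hv
        rw [ha']; exact hqa
      · right
        have hv : (c : F) = (qc : F) := by rw [hvc, h, zero_add]
        have hc' : c = qc := Subtype.ext hv
        rw [hc']; exact hqc
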